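/- arXiv:math/0304194 — 6 statements merged into one kernel-verified Lean document; each statement's English description precedes it below -/
import Mathlib

section
/- If a finite sum of square roots of positive integers is an integer, and each summand is either an integer or the square root of an integer, then each summand is itself an integer. More precisely: if n₁, ..., nₖ are positive integers and √n₁ + ... + √nₖ is an integer, then each √nᵢ is an integer. -/
/-!
If `√nᵢ` were irrational, then `x ↦ -x` on `√nᵢ` extends to a `ℚ`-embedding `φ` of
`ℚ(√n₁, …, √nₖ)` into `ℂ`. Every `√nⱼ` squares into `ℚ`, so `φ (√nⱼ) = ±√nⱼ`; and `φ` fixes the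
rational sum. Hence `∑ⱼ (√nⱼ - φ (√nⱼ)) = 0` is a sum of nonnegative reals containing the positive
term `2√nᵢ`.
-/

open Polynomial IntermediateField

section

variable {K L : Type*} [Field K] [Field L] [Algebra K L]

theorem minpoly_eq_X_sq_sub_C {x : L} {q : K} (hx : x ^ 2 = algebraMap K L q)
    (hxK : x ∉ (algebraMap K L).range) : minpoly K x = X ^ 2 - C q := by
  have hmon : (X ^ 2 - C q).Monic := monic_X_pow_sub_C q two_ne_zero
  have hroot : aeval x (X ^ 2 - C q) = 0 := by simp [hx]
  have hint : IsIntegral K x := ⟨_, hmon, hroot⟩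
  refine (eq_of_monic_of_dvd_of_natDegree_le (minpoly.monic hint) hmon
    (minpoly.dvd K x hroot) ?_).symm
  rw [natDegree_X_pow_sub_C]
  exact (minpoly.two_le_natDegree_iff hint).mpr hxK

theorem exists_algHom_adjoin_eq_neg {M : Type*} [Field M] [IsAlgClosed M] [Algebra K M]
    [Algebra L M] [IsScalarTower K L M] {S : Set L} (hS : ∀ s ∈ S, IsIntegral K s) {x : L}
    (hx : x ∈ adjoin K S) {q : K} (hxq : x ^ 2 = algebraMap K L q)
    (hxK : x ∉ (algebraMap K L).range) :
    ∃ φ : adjoin K S →ₐ[K] M, φ ⟨x, hx⟩ = -algebraMap L M x := by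
  refine exists_algHom_adjoin_of_splits_of_aeval
    (fun s hs => ⟨hS s hs, IsAlgClosed.splits _⟩) hx ?_
  rw [minpoly_eq_X_sq_sub_C hxq hxK, map_sub, aeval_X_pow, aeval_C, neg_sq, ← map_pow, hxq,
    ← IsScalarTower.algebraMap_apply, sub_self]

theorem AlgHom.apply_eq_or_eq_neg_of_sq_eq {F M : Type*} [CommRing F] [CommRing M] [IsDomain M]
    [Algebra K F] [Algebra K M] (φ : F →ₐ[K] M) {y : F} {z : M} {q : K}
    (hy : y ^ 2 = algebraMap K F q) (hz : z ^ 2 = algebraMap K M q) :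
    φ y = z ∨ φ y = -z :=
  sq_eq_sq_iff_eq_or_eq_neg.mp (by rw [← map_pow, hy, φ.commutes, hz])

end

theorem mem_range_of_sum_mem_range {K L ι : Type*} [Field K] [Field L] [LinearOrder L]
    [IsStrictOrderedRing L] [Algebra K L] [Fintype ι] {x : ι → L} (hx0 : ∀ j, 0 ≤ x j)
    (hsq : ∀ j, ∃ q : K, x j ^ 2 = algebraMap K L q)
    (hsum : ∑ j, x j ∈ (algebraMap K L).range) (i : ι) :
    x i ∈ (algebraMap K L).range := by
  by_contra hi
  choose q hq using hsq
  let F := adjoin K (Set.range x)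
  let M := AlgebraicClosure L
  have hmem (j : ι) : x j ∈ F := subset_adjoin K _ ⟨j, rfl⟩
  have hint : ∀ s ∈ Set.range x, IsIntegral K s := by
    rintro _ ⟨j, rfl⟩
    exact IsIntegral.of_pow two_pos (hq j ▸ isIntegral_algebraMap)
  obtain ⟨φ, hφi⟩ := exists_algHom_adjoin_eq_neg (M := M) hint (hmem i) (hq i) hi
  have hsign (j : ι) : ∃ c, (c = x j ∨ c = -x j) ∧ φ ⟨x j, hmem j⟩ = algebraMap L M c := by
    rcases φ.apply_eq_or_eq_neg_of_sq_eq (y := ⟨x j, hmem j⟩) (z := algebraMap L M (x j))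
      (Subtype.ext (hq j)) (by rw [← map_pow, hq j, ← IsScalarTower.algebraMap_apply]) with h | h
    · exact ⟨x j, Or.inl rfl, h⟩
    · exact ⟨-x j, Or.inr rfl, by rw [h, map_neg]⟩
  choose c hc hφc using hsign
  have hci : c i = -x i :=
    (algebraMap L M).injective (by rw [← hφc, hφi, map_neg])
  have hsum_c : ∑ j, c j = ∑ j, x j := by
    obtain ⟨r, hr⟩ := hsum
    apply (algebraMap L M).injective
    calc algebraMap L M (∑ j, c j) = ∑ j, φ ⟨x j, hmem j⟩ := by simp only [map_sum, hφc]
      _ = φ (algebraMap K F r) := by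
        rw [← map_sum]
        congr 1
        exact Subtype.ext (by simp [hr])
      _ = algebraMap L M (∑ j, x j) := by
        rw [φ.commutes, ← hr, ← IsScalarTower.algebraMap_apply]
  have hnonneg : ∀ j ∈ Finset.univ, 0 ≤ x j - c j := by
    intro j _
    rcases hc j with h | h <;> linarith [hx0 j]
  have hxi : x i - c i = 0 :=
    (Finset.sum_eq_zero_iff_of_nonneg hnonneg).mp
      (by rw [Finset.sum_sub_distrib, hsum_c, sub_self]) i (Finset.mem_univ i)
  exact hi ⟨0, by rw [map_zero]; linarith⟩

theorem sum_sqrt_int_of_int_general {k : ℕ} (n : Fin k → ℕ)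
    (h : ∃ m : ℤ, ∑ i, Real.sqrt (n i) = (m : ℝ)) :
    ∀ i, ∃ m : ℤ, Real.sqrt (n i) = (m : ℝ) := by
  obtain ⟨m, hm⟩ := h
  intro i
  have hrat : √(n i : ℝ) ∈ (algebraMap ℚ ℝ).range :=
    mem_range_of_sum_mem_range (K := ℚ) (x := fun j => √(n j : ℝ)) (fun j => Real.sqrt_nonneg _)
      (fun j => ⟨n j, by simp⟩) ⟨m, by simp [hm]⟩ i
  obtain ⟨r, hr⟩ : IsSquare (n i) :=
    irrational_sqrt_natCast_iff.not_left.mp (fun hirr => hirr hrat)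
  exact ⟨r, by rw [hr, Nat.cast_mul, Real.sqrt_mul_self (Nat.cast_nonneg r)]; rfl⟩

/-- If `n₁, ..., nₖ` are positive integers and `√n₁ + ... + √nₖ` is an integer,
then each `√nᵢ` is an integer. -/
theorem sum_sqrt_int_of_int {k : ℕ} (n : Fin k → ℕ) (hpos : ∀ i, 0 < n i)
    (h : ∃ m : ℤ, ∑ i, Real.sqrt (n i) = (m : ℝ)) :
    ∀ i, ∃ m : ℤ, Real.sqrt (n i) = (m : ℝ) :=
  sum_sqrt_int_of_int_general n h
end

section
/- Let p < q be distinct primes with pq ≠ 6, and suppose p divides q - 1. Then there are no nonnegative integers a, b with b ≥ p - 1 satisfying p² = 1 + a·p + b·q. Equivalently: if p² = 1 + a·p + b·q with a, b ≥ 0 integers and q ≡ 1 (mod p), then b + 1 ≡ 0 (mod p), forcing b ≥ p - 1 and hence p² ≥ 1 + (p-1)·q, which implies p + 1 ≥ q, so (p,q) = (2,3). -/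
/-- Let `p < q` be primes with `p * q ≠ 6` and `p ∣ q - 1`. Then there are no
nonnegative integers `a, b` with `b ≥ p - 1` satisfying `p² = 1 + a·p + b·q`.
Moreover, any solution of `p² = 1 + a·p + b·q` satisfies `p ∣ b + 1`,
hence `b ≥ p - 1`, hence there is no solution at all. -/
theorem no_solution_dim_count (p q : ℕ) (hp : p.Prime) (hq : q.Prime) (hlt : p < q)
    (hpq : p * q ≠ 6) (hdvd : p ∣ q - 1) :
    (¬ ∃ a b : ℕ, p - 1 ≤ b ∧ p ^ 2 = 1 + a * p + b * q) ∧
    ∀ a b : ℕ, p ^ 2 = 1 + a * p + b * q →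
      p ∣ b + 1 ∧ p - 1 ≤ b ∧ 1 + (p - 1) * q ≤ p ^ 2 ∧ q ≤ p + 1 ∧ p = 2 ∧ q = 3 := by
  have hp2 := hp.two_le
  have hq2 := hq.two_le
  have key : ∀ a b : ℕ, p ^ 2 = 1 + a * p + b * q → False := by
    intro a b h
    obtain ⟨k, hk⟩ := hdvd
    have hqk : q = p * k + 1 := by omega
    -- p ∣ b + 1
    have heq : b + 1 + (a + b * k) * p = p * p := by
      subst hqk
      have e1 : b * (p * k + 1) = (b * k) * p + b := by ring
      have e2 : p ^ 2 = p * p := sq p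
      have e3 : (a + b * k) * p = a * p + (b * k) * p := by ring
      linarith
    have hdvdb : p ∣ b + 1 := by
      have h1 : p ∣ p * p - (a + b * k) * p :=
        Nat.dvd_sub (Dvd.intro p rfl) (Dvd.intro_left _ rfl)
      have h2 : b + 1 = p * p - (a + b * k) * p := by omega
      rw [h2]; exact h1
    have hb : p - 1 ≤ b := by
      have := Nat.le_of_dvd (by omega) hdvdb
      omega
    obtain ⟨m, rfl⟩ : ∃ m, p = m + 2 := ⟨p - 2, by omega⟩
    have hbm : m + 1 ≤ b := by omega
    have hqm : m + 3 ≤ q := by omega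
    have h1 : (m + 1) * (m + 3) ≤ b * q := Nat.mul_le_mul hbm hqm
    have ha : a = 0 := by nlinarith
    subst ha
    have hq3 : q = m + 3 := by
      by_contra hne
      have hq4 : m + 4 ≤ q := by omega
      have : (m + 1) * (m + 4) ≤ b * q := Nat.mul_le_mul hbm hq4
      nlinarith
    have hb3 : b = m + 1 := by
      by_contra hne
      have : (m + 2) * (m + 3) ≤ b * q := by
        rw [hq3]; exact Nat.mul_le_mul (by omega) le_rfl
      nlinarith
    -- p = m+2, q = m+3 both prime; one is even
    rcases Nat.even_or_odd m with he | ho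
    · have : Even (m + 2) := by rcases he with ⟨t, ht⟩; exact ⟨t + 1, by omega⟩
      have hm0 : m = 0 := by
        have := (Nat.Prime.even_iff hp).mp this
        omega
      subst hm0
      rw [hq3] at hpq
      exact hpq rfl
    · have : Even (m + 3) := by rcases ho with ⟨t, ht⟩; exact ⟨t + 2, by omega⟩
      rw [← hq3] at this
      have := (Nat.Prime.even_iff hq).mp this
      omega
  constructor
  · rintro ⟨a, b, _, h⟩; exact key a b h
  · intro a b h; exact absurd h (fun h => key a b h)
end

section
/- Let p < q be distinct primes. The equation a·p² + b·q² = p²·q² - p has a unique solution in nonnegative integers (a, b), namely a = (q² - 1)/p and b = p² - p, provided p divides q - 1 (so that (q² - 1)/p is an integer). -/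
set_option maxHeartbeats 1000000 in
/-- For primes `p < q` with `p ∣ q - 1`, the equation `a·p² + b·q² = p²·q² - p` has a
unique solution in nonnegative integers, namely `a = (q² - 1)/p`, `b = p² - p`. -/
theorem unique_solution_rep_count (p q : ℕ) (hp : p.Prime) (hq : q.Prime) (hlt : p < q)
    (hdvd : p ∣ q - 1) :
    ∀ a b : ℕ, a * p ^ 2 + b * q ^ 2 = p ^ 2 * q ^ 2 - p ↔
      (a = (q ^ 2 - 1) / p ∧ b = p ^ 2 - p) := by
  have hp2 := hp.two_le
  have hq2 := hq.two_le
  have hq1 : 1 ≤ q ^ 2 := Nat.one_le_pow _ _ (by omega)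
  have hpq1 : p ∣ q ^ 2 - 1 := by
    have h1 : q ^ 2 - 1 ^ 2 = (q + 1) * (q - 1) := Nat.sq_sub_sq q 1
    simp only [one_pow] at h1
    rw [h1]
    exact Dvd.dvd.mul_left hdvd _
  obtain ⟨c, hc⟩ := hpq1
  have hdiv : (q ^ 2 - 1) / p = c := by
    rw [hc, Nat.mul_div_cancel_left _ (by omega : 0 < p)]
  have hcz : (p : ℤ) * c = (q : ℤ) ^ 2 - 1 := by
    have := hc
    zify [hq1] at this
    linarith
  have hpple : p ≤ p ^ 2 := Nat.le_self_pow (by omega) p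
  have hple : p ≤ p ^ 2 * q ^ 2 := le_trans hpple (Nat.le_mul_of_pos_right _ (by omega))
  have hsol : c * p ^ 2 + (p ^ 2 - p) * q ^ 2 = p ^ 2 * q ^ 2 - p := by
    zify [hpple, hple]
    linear_combination (p : ℤ) * hcz
  intro a b
  constructor
  · intro h
    -- cast to ℤ and compare with hsol
    have hZ : (a : ℤ) * p ^ 2 + b * q ^ 2 = (c : ℤ) * p ^ 2 + ((p:ℤ) ^ 2 - p) * q ^ 2 := by
      have h1 := h
      have h2 := hsol
      zify [hple] at h1
      zify [hpple, hple] at h2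
      linarith
    have key : ((a : ℤ) - c) * (p:ℤ) ^ 2 = (((p:ℤ) ^ 2 - p) - b) * (q:ℤ) ^ 2 := by ring_nf; linarith [hZ]
    have hcop : IsCoprime ((q:ℤ) ^ 2) ((p:ℤ) ^ 2) := by
      have : Nat.Coprime q p := (Nat.coprime_primes hq hp).mpr (by omega)
      exact (Nat.isCoprime_iff_coprime.mpr this).pow
    have hdvd2 : (q:ℤ) ^ 2 ∣ ((a : ℤ) - c) * (p:ℤ) ^ 2 := ⟨((p:ℤ) ^ 2 - p) - b, by linarith [key]⟩
    have hdvd3 : (q:ℤ) ^ 2 ∣ ((a : ℤ) - c) := hcop.dvd_of_dvd_mul_right hdvd2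
    have haq : a < q ^ 2 := by
      have h' : a * p ^ 2 + b * q ^ 2 + p = p ^ 2 * q ^ 2 := by omega
      by_contra hcon
      push_neg at hcon
      nlinarith [Nat.mul_le_mul_right (p ^ 2) hcon]
    have hcq : c < q ^ 2 := by nlinarith [hc]
    have hac : (a : ℤ) = c := by
      have habs : |(a : ℤ) - c| < (q:ℤ) ^ 2 := by
        have haz : (a:ℤ) < (q:ℤ) ^ 2 := by exact_mod_cast haq
        have hczq : (c:ℤ) < (q:ℤ) ^ 2 := by exact_mod_cast hcq
        have ha0 : 0 ≤ (a:ℤ) := Int.natCast_nonneg a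
        have hc0 : 0 ≤ (c:ℤ) := Int.natCast_nonneg c
        rw [abs_lt]
        constructor <;> linarith
      have := Int.eq_zero_of_abs_lt_dvd hdvd3 habs
      linarith
    have ha : a = c := by exact_mod_cast hac
    have hb : b = p ^ 2 - p := by
      have : ((p:ℤ) ^ 2 - p - b) * (q:ℤ) ^ 2 = 0 := by rw [← key, hac]; ring
      have hq0 : ((q:ℤ) ^ 2) ≠ 0 := by positivity
      have hbz : (b : ℤ) = (p:ℤ) ^ 2 - p := by
        rcases mul_eq_zero.mp this with h' | h'
        · linarith
        · exact absurd h' hq0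
      have hcast : ((p ^ 2 - p : ℕ) : ℤ) = (p:ℤ) ^ 2 - p := by
        push_cast [Nat.cast_sub hpple]
        ring
      exact_mod_cast hbz.trans hcast.symm
    exact ⟨by rw [hdiv]; exact ha, hb⟩
  · rintro ⟨ha, hb⟩
    rw [ha, hb, hdiv]
    exact hsol
end

section
/- Let p be a prime and a ≥ 1. The equation p^i + p^j = p^a - 1 has a solution with integers 0 ≤ i ≤ j ≤ a - 1 if and only if p^a ∈ {3, 4}. (For p^a = 3: 1 + 1 = 2 = 3 - 1; for p^a = 4: 1 + 2 = 3 = 4 - 1.) -/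
/-- For a prime `p` and `a ≥ 1`, the equation `p^i + p^j = p^a - 1` has a solution with
`0 ≤ i ≤ j ≤ a - 1` if and only if `p^a ∈ {3, 4}`. -/
theorem two_powers_sum (p a : ℕ) (hp : p.Prime) (ha : 1 ≤ a) :
    (∃ i j : ℕ, i ≤ j ∧ j ≤ a - 1 ∧ p ^ i + p ^ j = p ^ a - 1) ↔
      (p ^ a = 3 ∨ p ^ a = 4) := by
  have hp1 : 1 < p := hp.one_lt
  have hpa1 : 1 ≤ p ^ a := Nat.one_le_pow _ _ hp.pos
  constructor
  · rintro ⟨i, j, hij, hja, heq⟩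
    have heq' : p ^ i + p ^ j + 1 = p ^ a := by omega
    have hdvda : p ∣ p ^ a := dvd_pow_self p (by omega)
    rcases Nat.eq_zero_or_pos i with hi | hi
    · subst hi
      rw [pow_zero] at heq'
      rcases Nat.eq_zero_or_pos j with hj | hj
      · subst hj
        rw [pow_zero] at heq'
        left; omega
      · -- p ∣ 2, so p = 2
        have hdj : p ∣ p ^ j := dvd_pow_self p (by omega)
        have h2 : p ∣ 2 := by
          have : p ∣ p ^ j + 2 := by
            have : p ^ j + 2 = p ^ a := by omega
            rw [this]; exact hdvda
          exact (Nat.dvd_add_right hdj).mp this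
        have hp2 : p = 2 := (Nat.prime_dvd_prime_iff_eq hp Nat.prime_two).mp h2
        subst hp2
        have hkey : 2 ^ j + 2 = 2 ^ a := by omega
        have hja' : j < a := by
          have h2j : 2 ^ j < 2 ^ a := by omega
          exact (Nat.pow_lt_pow_iff_right (by norm_num)).mp h2j
        have h2j1 : 2 ≤ 2 ^ j := by
          calc 2 = 2 ^ 1 := by norm_num
          _ ≤ 2 ^ j := Nat.pow_le_pow_right (by norm_num) hj
        have hub : 2 ^ a ≤ 2 ^ (j + 1) := by rw [pow_succ]; omega
        have haj : a ≤ j + 1 := (Nat.pow_le_pow_iff_right (by norm_num)).mp hub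
        have haeq : a = j + 1 := by omega
        subst haeq
        rw [pow_succ] at hkey
        have : 2 ^ j = 2 := by omega
        have hj1 : j = 1 := by
          have h5 : (2:ℕ) ^ j = 2 ^ 1 := by rw [pow_one]; omega
          exact Nat.pow_right_injective (le_refl 2) h5
        right; subst hj1; norm_num
    · exfalso
      have h1 : p ∣ p ^ i := dvd_pow_self p (by omega)
      have h2 : p ∣ p ^ j := dvd_pow_self p (by omega)
      have : p ∣ 1 := by
        have h3 : p ∣ p ^ i + p ^ j := h1.add h2
        have h4 : p ∣ p ^ i + p ^ j + 1 := heq' ▸ hdvda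
        exact (Nat.dvd_add_right h3).mp h4
      have := Nat.le_of_dvd one_pos this
      omega
  · rintro (h | h)
    · have hp3 : p = 3 := by
        have : p ∣ 3 := h ▸ dvd_pow_self p (by omega)
        exact (Nat.prime_dvd_prime_iff_eq hp Nat.prime_three).mp this
      subst hp3
      have ha1 : a = 1 := by
        have : (3:ℕ) ^ a = 3 ^ 1 := by rw [h, pow_one]
        exact Nat.pow_right_injective (by norm_num) this
      subst ha1
      exact ⟨0, 0, le_refl _, by omega, by norm_num⟩
    · have hp2 : p = 2 := by
        have hd : p ∣ 4 := h ▸ dvd_pow_self p (by omega)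
        have : p ≤ 4 := Nat.le_of_dvd (by norm_num) hd
        interval_cases p <;> first | rfl | omega | exact absurd hp (by decide)
      subst hp2
      have ha2 : a = 2 := by
        have : (2:ℕ) ^ a = 2 ^ 2 := by rw [h]; norm_num
        exact Nat.pow_right_injective (le_refl 2) this
      subst ha2
      exact ⟨0, 1, by norm_num, by norm_num, by norm_num⟩
end

section
/- Let p be a prime and a ≥ 3. The equation p^i + p^j + p^k = p^a - 1 has a solution with integers 0 ≤ i < j < k ≤ a - 1 if and only if p^a = 8. (For p^a = 8: 1 + 2 + 4 = 7 = 8 - 1.) -/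
/-- For a prime `p` and `a ≥ 3`, the equation `p^i + p^j + p^k = p^a - 1` has a solution
with `0 ≤ i < j < k ≤ a - 1` if and only if `p^a = 8`. -/
theorem three_powers_sum (p a : ℕ) (hp : p.Prime) (ha : 3 ≤ a) :
    (∃ i j k : ℕ, i < j ∧ j < k ∧ k ≤ a - 1 ∧ p ^ i + p ^ j + p ^ k = p ^ a - 1) ↔
      p ^ a = 8 := by
  constructor
  · rintro ⟨i, j, k, hij, hjk, hka, heq⟩
    have h1 : 1 ≤ p ^ a := Nat.one_le_pow _ _ hp.pos
    have E : p ^ i + p ^ j + p ^ k + 1 = p ^ a := by omega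
    have hpa : p ∣ p ^ a := dvd_pow_self p (by omega)
    have hpj : p ∣ p ^ j := dvd_pow_self p (by omega)
    have hpk : p ∣ p ^ k := dvd_pow_self p (by omega)
    have hi : i = 0 := by
      by_contra h
      have hpi : p ∣ p ^ i := dvd_pow_self p h
      have hd : p ∣ p ^ i + p ^ j + p ^ k + 1 := E ▸ hpa
      have : p ∣ 1 := (Nat.dvd_add_right ((hpi.add hpj).add hpk)).mp hd
      have := Nat.le_of_dvd one_pos this
      have := hp.two_le
      omega
    subst hi
    rw [pow_zero] at E
    have E' : p ^ j + p ^ k + 2 = p ^ a := by omega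
    have hd : p ∣ p ^ j + p ^ k + 2 := E' ▸ hpa
    have hp2' : p ∣ 2 := (Nat.dvd_add_right (hpj.add hpk)).mp hd
    have hp2 : p = 2 := (Nat.prime_dvd_prime_iff_eq hp Nat.prime_two).mp hp2'
    subst hp2
    obtain ⟨j', rfl⟩ : ∃ j', j = j' + 1 := ⟨j - 1, by omega⟩
    obtain ⟨k', rfl⟩ : ∃ k', k = k' + 1 := ⟨k - 1, by omega⟩
    obtain ⟨a', rfl⟩ : ∃ a', a = a' + 1 := ⟨a - 1, by omega⟩
    rw [pow_succ, pow_succ, pow_succ] at E'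
    have F : 2 ^ j' + 2 ^ k' + 1 = 2 ^ a' := by omega
    have da : 2 ∣ 2 ^ a' := dvd_pow_self 2 (by omega)
    have dk : 2 ∣ 2 ^ k' := dvd_pow_self 2 (by omega)
    have hj0 : j' = 0 := by
      by_contra h
      have : 2 ∣ 2 ^ j' := dvd_pow_self 2 h
      omega
    subst hj0
    rw [pow_zero] at F
    obtain ⟨k'', rfl⟩ : ∃ k'', k' = k'' + 1 := ⟨k' - 1, by omega⟩
    obtain ⟨a'', rfl⟩ : ∃ a'', a' = a'' + 1 := ⟨a' - 1, by omega⟩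
    rw [pow_succ, pow_succ] at F
    have F2 : 2 ^ k'' + 1 = 2 ^ a'' := by omega
    have da2 : 2 ∣ 2 ^ a'' := dvd_pow_self 2 (by omega)
    have hk0 : k'' = 0 := by
      by_contra h
      have : 2 ∣ 2 ^ k'' := dvd_pow_self 2 h
      omega
    subst hk0
    rw [pow_zero] at F2
    have ha2 : 2 ^ a'' = 2 ^ 1 := by omega
    have : a'' = 1 := Nat.pow_right_injective (le_refl 2) ha2
    subst this
    norm_num
  · intro h
    have hdvd : p ∣ 2 := by
      have h8 : (8 : ℕ) = 2 ^ 3 := by norm_num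
      exact hp.dvd_of_dvd_pow (h8 ▸ h ▸ dvd_pow_self p (by omega))
    have hp2 : p = 2 := (Nat.prime_dvd_prime_iff_eq hp Nat.prime_two).mp hdvd
    subst hp2
    have h23 : 2 ^ a = 2 ^ 3 := by rw [h]; norm_num
    have ha3 : a = 3 := Nat.pow_right_injective (le_refl 2) h23
    subst ha3
    exact ⟨0, 1, 2, by norm_num, by norm_num, by norm_num, by norm_num⟩
end

section
/- Let N be a finite group on which every non-identity element has the same order, and suppose a group B acts on N so that the action is simply transitive on the non-identity elements of N (so |B| = |N| - 1). Then N is an elementary abelian p-group for some prime p. Consequently |N| - 1 = p^a - 1 for a prime power p^a. -/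
/-- Let `N` be a finite group in which all non-identity elements have the same order, and
suppose a group `B` acts on `N` by automorphisms, simply transitively on the non-identity
elements. Then `N` is an elementary abelian `p`-group for some prime `p`; in particular
`|N| = p^a` is a prime power. -/
theorem elementary_abelian_of_simply_transitive
    (N : Type*) [Group N] [Finite N] (B : Type*) [Group B]
    [MulDistribMulAction B N]
    (horder : ∀ x y : N, x ≠ 1 → y ≠ 1 → orderOf x = orderOf y)
    (htrans : ∀ x y : N, x ≠ 1 → y ≠ 1 → ∃! b : B, b • x = y)
    (hnontriv : ∃ x : N, x ≠ 1) :
    ∃ p : ℕ, p.Prime ∧ (∀ x : N, x ^ p = 1) ∧ (∀ x y : N, x * y = y * x) ∧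
      ∃ a : ℕ, Nat.card N = p ^ a := by
  obtain ⟨x0, hx0⟩ := hnontriv
  haveI : Nontrivial N := ⟨x0, 1, hx0⟩
  set n := orderOf x0 with hn
  have hn1 : n ≠ 1 := by simpa [hn, orderOf_eq_one_iff] using hx0
  have hn0 : n ≠ 0 := by
    have := orderOf_pos x0
    omega
  set p := n.minFac with hp
  have hpp : p.Prime := Nat.minFac_prime hn1
  -- element of order p
  have hx1ord : orderOf (x0 ^ (n / p)) = p := by
    rw [orderOf_pow_of_dvd (Nat.div_pos (Nat.minFac_le (Nat.pos_of_ne_zero hn0)) hpp.pos).ne' (Nat.div_dvd_of_dvd n.minFac_dvd)]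
    rw [← hn, Nat.div_div_self n.minFac_dvd hn0]
  have hx1ne : x0 ^ (n / p) ≠ 1 := by
    intro h
    rw [h, orderOf_one] at hx1ord
    exact hpp.one_lt.ne' hx1ord.symm
  -- all nonidentity elements have order p
  have hordp : ∀ x : N, x ≠ 1 → orderOf x = p := fun x hx =>
    (horder x _ hx hx1ne).trans hx1ord
  have hxp : ∀ x : N, x ^ p = 1 := by
    intro x
    by_cases hx : x = 1
    · simp [hx]
    · rw [← hordp x hx]; exact pow_orderOf_eq_one x
  haveI : Fact p.Prime := ⟨hpp⟩
  have hPG : IsPGroup p N := by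
    intro x
    exact ⟨1, by simpa using hxp x⟩
  haveI := hPG.center_nontrivial
  obtain ⟨z, hz⟩ := exists_ne (1 : Subgroup.center N)
  have hz1 : (z : N) ≠ 1 := fun h => hz (Subtype.ext h)
  have hcenter : ∀ x : N, x ∈ Subgroup.center N := by
    intro x
    by_cases hx : x = 1
    · exact hx ▸ Subgroup.one_mem _
    · obtain ⟨b, hb, -⟩ := htrans (z : N) x hz1 hx
      rw [← hb]
      rw [Subgroup.mem_center_iff]
      intro g
      have hg : g = b • (b⁻¹ • g) := by simp
      rw [hg, ← smul_mul', ← smul_mul',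
        Subgroup.mem_center_iff.mp z.2 (b⁻¹ • g)]
  refine ⟨p, hpp, hxp, fun x y => ?_, ?_⟩
  · exact (Subgroup.mem_center_iff.mp (hcenter y) x)
  · exact hPG.exists_card_eq
end
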